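/- arXiv:1906.10741 — 2 statements merged into one kernel-verified Lean document; each statement's English description precedes it below -/
import Mathlib

section
/- The first-kind Nédélec vector polynomial space P⁻_r(Tℝ³) := P_{r-1}(Tℝ³) ⊕ L₁(H_{r-1}(Tℝ³)), where (L₁(Y))^I = ε_{IJL} X^L Y^J, has dimension (1/2) r (r+2)(r+3). -/
open MvPolynomial

/-- Levi-Civita permutation symbol on `Fin 3`. -/
noncomputable def levi (i j k : Fin 3) : ℝ :=
  (((j : ℕ) : ℝ) - ((i : ℕ) : ℝ)) * (((k : ℕ) : ℝ) - ((i : ℕ) : ℝ)) *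
    (((k : ℕ) : ℝ) - ((j : ℕ) : ℝ)) / 2

/-- `P_r(Tℝ³)`: ℝ³-valued polynomial maps with components of total degree at most `r`. -/
noncomputable def Pvec (r : ℕ) : Submodule ℝ (Fin 3 → MvPolynomial (Fin 3) ℝ) :=
  Submodule.pi Set.univ fun _ => restrictTotalDegree (Fin 3) ℝ r

/-- `H_r(Tℝ³)`: ℝ³-valued polynomial maps with homogeneous components of degree `r`. -/
noncomputable def Hvec (r : ℕ) : Submodule ℝ (Fin 3 → MvPolynomial (Fin 3) ℝ) :=
  Submodule.pi Set.univ fun _ => homogeneousSubmodule (Fin 3) ℝ r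

/-- The linear map `(L₁(Y))^I = ε_{I J L} X^L Y^J`. -/
noncomputable def L1 : (Fin 3 → MvPolynomial (Fin 3) ℝ) →ₗ[ℝ] (Fin 3 → MvPolynomial (Fin 3) ℝ) where
  toFun Y I := ∑ j : Fin 3, ∑ l : Fin 3, C (levi I j l) * X l * Y j
  map_add' Y Z := by
    funext I
    simp [Pi.add_apply, mul_add, Finset.sum_add_distrib]
  map_smul' c Y := by
    funext I
    simp [Pi.smul_apply, Finset.smul_sum, mul_smul_comm]


/-!
`L₁` is the cross product `Y ↦ x × Y` with the position field `x = (X₀, X₁, X₂)`, so it maps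
`H_{r-1}` into `H_r`, which meets `P_{r-1}` only in `0`. If `x × Y = 0` then `X₀ ∣ X₁ Y₀`, and
primality of `X₀` gives `Y = f x`; hence the kernel of `L₁` on `H_m` is `x · H_{m-1}(ℝ³)`, of
dimension `(m+1)m/2` (and `0` for `m = 0`). Rank–nullity gives
`dim L₁(H_{r-1}) = 3 r(r+1)/2 - r(r-1)/2 = r(r+2)`, and `dim P_{r-1} = r(r+1)(r+2)/2`.
The monomial counts are stars and bars.
-/

open Module

lemma Nat.two_mul_add_two_choose_two (n : ℕ) : 2 * (n + 2).choose 2 = (n + 2) * (n + 1) := by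
  have h := Nat.descFactorial_eq_factorial_mul_choose (n + 2) 2
  simp only [Nat.descFactorial, Nat.factorial_two, Nat.add_one_sub_one, tsub_zero, mul_one] at h
  linarith

lemma Nat.six_mul_add_three_choose_three (n : ℕ) :
    6 * (n + 3).choose 3 = (n + 3) * (n + 2) * (n + 1) := by
  have h := Nat.descFactorial_eq_factorial_mul_choose (n + 3) 3
  simp only [Nat.descFactorial, Nat.factorial, Nat.reduceSubDiff, Nat.add_one_sub_one, tsub_zero,
    mul_one] at h
  linarith

namespace Finsupp

variable (σ : Type*) [Fintype σ]

lemma card_degree_eq (k : ℕ) :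
    Nat.card {d : σ →₀ ℕ // d.degree = k} = (Fintype.card σ + k - 1).choose k := by
  classical
  rw [← Sym.card_sym_eq_choose, ← Nat.card_eq_fintype_card]
  exact Nat.card_congr (Sym.equivNatSum σ k).symm

lemma degree_option (P : Option σ →₀ ℕ) : P.degree = P none + P.some.degree := by
  simp [degree_eq_sum, Fintype.sum_option, some_apply]

/-- The coordinate at `none` is the slack `m - d.degree`. -/
noncomputable def degreeLeEquiv (m : ℕ) :
    {d : σ →₀ ℕ // d.degree ≤ m} ≃ {P : Option σ →₀ ℕ // P.degree = m} :=
  let slack : {d : σ →₀ ℕ // d.degree ≤ m} ≃ {x : ℕ × (σ →₀ ℕ) // x.1 + x.2.degree = m} :=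
    { toFun := fun d => ⟨(m - d.1.degree, d.1), by have := d.2; dsimp only; omega⟩
      invFun := fun x => ⟨x.1.2, by have := x.2; omega⟩
      left_inv := fun d => rfl
      right_inv := fun ⟨⟨a, d⟩, h⟩ => by ext <;> dsimp only at h ⊢; omega }
  slack.trans (optionEquiv.subtypeEquiv fun P => by simp [degree_option]).symm

lemma card_degree_le (m : ℕ) :
    Nat.card {d : σ →₀ ℕ // d.degree ≤ m} = (Fintype.card σ + m).choose m := by
  rw [Nat.card_congr (degreeLeEquiv σ m), card_degree_eq, Fintype.card_option,
    Nat.add_right_comm, Nat.add_sub_cancel]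

end Finsupp

namespace MvPolynomial

variable {σ R : Type*} [CommSemiring R]

instance [Finite σ] (m : ℕ) : Module.Finite R (restrictTotalDegree σ R m) :=
  have : Finite {d : σ →₀ ℕ | d.degree ≤ m} := (Finsupp.finite_of_degree_le m).to_subtype
  .of_basis (basisRestrictSupport R {d : σ →₀ ℕ | d.degree ≤ m})

instance [Finite σ] (m : ℕ) : Module.Finite R (homogeneousSubmodule σ R m) :=
  have : Finite {d : σ →₀ ℕ | d.degree = m} := (Finsupp.finite_of_degree_eq m).to_subtype
  homogeneousSubmodule_eq_finsupp_supported (σ := σ) R m ▸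
    .of_basis (basisRestrictSupport R {d : σ →₀ ℕ | d.degree = m})

variable (σ R) in
lemma finrank_restrictTotalDegree [Fintype σ] [StrongRankCondition R] (m : ℕ) :
    finrank R (restrictTotalDegree σ R m) = (Fintype.card σ + m).choose m :=
  (finrank_eq_nat_card_basis (basisRestrictSupport R {d : σ →₀ ℕ | d.degree ≤ m})).trans
    (Finsupp.card_degree_le σ m)

variable (σ R) in
lemma finrank_homogeneousSubmodule [Fintype σ] [StrongRankCondition R] (k : ℕ) :
    finrank R (homogeneousSubmodule σ R k) = (Fintype.card σ + k - 1).choose k := by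
  rw [homogeneousSubmodule_eq_finsupp_supported]
  exact (finrank_eq_nat_card_basis (basisRestrictSupport R {d : σ →₀ ℕ | d.degree = k})).trans
    (Finsupp.card_degree_eq σ k)

lemma disjoint_restrictTotalDegree_homogeneousSubmodule {m n : ℕ} (h : m < n) :
    Disjoint (restrictTotalDegree σ R m) (homogeneousSubmodule σ R n) := by
  refine Submodule.disjoint_def.mpr fun p hp hq => ?_
  by_contra hp0
  have := (mem_homogeneousSubmodule n p).mp hq |>.totalDegree hp0
  rw [mem_restrictTotalDegree] at hp
  omega

lemma IsHomogeneous.of_X_mul {f : MvPolynomial σ R} {i : σ} {n : ℕ}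
    (h : (X i * f).IsHomogeneous (n + 1)) : f.IsHomogeneous n := by
  intro d hd
  have := @h (Finsupp.single i 1 + d) (by rwa [coeff_X_mul])
  rw [map_add, Pi.one_def, ← Finsupp.degree_eq_weight_one, Finsupp.degree_single] at this
  rw [Pi.one_def, ← Finsupp.degree_eq_weight_one]
  omega

lemma eq_zero_of_X_mul_isHomogeneous_zero [NoZeroDivisors R] [Nontrivial R]
    {f : MvPolynomial σ R} {i : σ} (h : (X i * f).IsHomogeneous 0) : f = 0 := by
  by_contra hf
  have := h.totalDegree (mul_ne_zero (X_ne_zero i) hf)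
  rw [totalDegree_mul_of_isDomain (X_ne_zero i) hf, totalDegree_X] at this
  omega

end MvPolynomial

namespace Submodule

section Pi

variable {R ι : Type*} [Semiring R] {φ : ι → Type*} [∀ i, AddCommMonoid (φ i)]
  [∀ i, Module R (φ i)]

def piUnivEquiv (p : ∀ i, Submodule R (φ i)) : pi Set.univ p ≃ₗ[R] ∀ i, p i where
  toFun x i := ⟨x.1 i, x.2 i trivial⟩
  map_add' _ _ := rfl
  map_smul' _ _ := rfl
  invFun x := ⟨fun i => x i, fun i _ => (x i).2⟩
  left_inv _ := rfl
  right_inv _ := rfl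

instance finite_pi_univ [Finite ι] (p : ∀ i, Submodule R (φ i)) [∀ i, Module.Finite R (p i)] :
    Module.Finite R (pi Set.univ p) :=
  Module.Finite.equiv (piUnivEquiv p).symm

lemma finrank_pi_univ [Fintype ι] [StrongRankCondition R] (p : ∀ i, Submodule R (φ i))
    [∀ i, Module.Free R (p i)] [∀ i, Module.Finite R (p i)] :
    finrank R (pi Set.univ p) = ∑ i, finrank R (p i) :=
  (piUnivEquiv p).finrank_eq.trans (finrank_pi_fintype R)

lemma disjoint_pi_univ {p q : ∀ i, Submodule R (φ i)} (h : ∀ i, Disjoint (p i) (q i)) :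
    Disjoint (pi Set.univ p) (pi Set.univ q) :=
  disjoint_def.mpr fun _ hp hq => funext fun i =>
    disjoint_def.mp (h i) _ (hp i trivial) (hq i trivial)

end Pi

lemma finrank_map_add_finrank_inf_ker {K V W : Type*} [DivisionRing K] [AddCommGroup V]
    [Module K V] [AddCommGroup W] [Module K W] (p : Submodule K V) [FiniteDimensional K p]
    (f : V →ₗ[K] W) : finrank K (p.map f) + finrank K ↥(p ⊓ LinearMap.ker f) = finrank K p := by
  rw [← LinearMap.range_domRestrict, ← map_comap_subtype, finrank_map_subtype_eq,
    ← LinearMap.ker_domRestrict]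
  exact LinearMap.finrank_range_add_finrank_ker _

end Submodule
local notation "𝕍" => Fin 3 → MvPolynomial (Fin 3) ℝ

lemma L1_apply (Y : 𝕍) :
    L1 Y = ![X 2 * Y 1 - X 1 * Y 2, X 0 * Y 2 - X 2 * Y 0, X 1 * Y 0 - X 0 * Y 1] := by
  funext I
  fin_cases I <;>
  · show ∑ j : Fin 3, ∑ l : Fin 3, C (levi _ j l) * X l * Y j = _
    simp only [Fin.sum_univ_three, levi]
    norm_num
    ring

lemma map_L1_Hvec_le (m : ℕ) : (Hvec m).map L1 ≤ Hvec (m + 1) := by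
  rintro _ ⟨Y, hY, rfl⟩ i -
  rw [L1_apply]
  have hXY (a b : Fin 3) : X a * Y b ∈ homogeneousSubmodule (Fin 3) ℝ (m + 1) := by
    simpa [add_comm] using (isHomogeneous_X ℝ a).mul (hY b trivial)
  fin_cases i <;> exact Submodule.sub_mem _ (hXY _ _) (hXY _ _)

noncomputable def radial : MvPolynomial (Fin 3) ℝ →ₗ[ℝ] 𝕍 :=
  LinearMap.pi fun i => LinearMap.mulLeft ℝ (X i)

lemma radial_apply (f : MvPolynomial (Fin 3) ℝ) (i : Fin 3) : radial f i = X i * f := rfl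

lemma radial_injective : Function.Injective radial :=
  fun _ _ h => mul_left_cancel₀ (X_ne_zero 0) (congrFun h 0)

lemma ker_L1 : LinearMap.ker L1 = LinearMap.range radial := by
  ext Y
  rw [LinearMap.mem_ker, LinearMap.mem_range, L1_apply]
  constructor
  · intro h
    have h₁ : X 0 * Y 1 = X 1 * Y 0 := by simpa [sub_eq_zero, eq_comm] using congrFun h 2
    have h₂ : X 0 * Y 2 = X 2 * Y 0 := by simpa [sub_eq_zero] using congrFun h 1
    obtain ⟨f, hf⟩ : X 0 ∣ Y 0 :=
      (X_prime.dvd_or_dvd ⟨Y 1, h₁.symm⟩).resolve_left (by simp [X_dvd_X])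
    have e₁ : Y 1 = X 1 * f := mul_left_cancel₀ (X_ne_zero 0) (by rw [h₁, hf]; ring)
    have e₂ : Y 2 = X 2 * f := mul_left_cancel₀ (X_ne_zero 0) (by rw [h₂, hf]; ring)
    refine ⟨f, funext fun i => ?_⟩
    fin_cases i <;> simp [radial_apply, hf, e₁, e₂]
  · rintro ⟨f, rfl⟩
    funext i
    fin_cases i <;> simp [radial_apply] <;> ring

lemma Hvec_succ_inf_ker_L1 (m : ℕ) :
    Hvec (m + 1) ⊓ LinearMap.ker L1 = (homogeneousSubmodule (Fin 3) ℝ m).map radial := by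
  rw [ker_L1]
  ext Y
  constructor
  · rintro ⟨hY, f, rfl⟩
    exact ⟨f, IsHomogeneous.of_X_mul (hY 0 trivial), rfl⟩
  · rintro ⟨f, hf, rfl⟩
    refine ⟨fun i _ => ?_, LinearMap.mem_range_self radial f⟩
    simpa [radial_apply, add_comm] using (isHomogeneous_X ℝ i).mul hf

lemma Hvec_zero_inf_ker_L1 : Hvec 0 ⊓ LinearMap.ker L1 = ⊥ := by
  rw [ker_L1, eq_bot_iff]
  rintro Y ⟨hY, f, rfl⟩
  rw [eq_zero_of_X_mul_isHomogeneous_zero (hY 0 trivial), map_zero]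
  exact Submodule.zero_mem _

instance (m : ℕ) : FiniteDimensional ℝ (Hvec m) := by
  unfold Hvec; infer_instance

instance (m : ℕ) : FiniteDimensional ℝ (Pvec m) := by
  unfold Pvec; infer_instance

lemma finrank_Hvec (m : ℕ) : finrank ℝ (Hvec m) = 3 * (m + 2).choose 2 := by
  rw [Hvec, Submodule.finrank_pi_univ]
  simp only [finrank_homogeneousSubmodule, Fintype.card_fin, Finset.sum_const, Finset.card_univ,
    smul_eq_mul]
  rw [show 3 + m - 1 = m + 2 by omega, Nat.choose_symm_add]

lemma finrank_Pvec (m : ℕ) : finrank ℝ (Pvec m) = 3 * (m + 3).choose 3 := by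
  rw [Pvec, Submodule.finrank_pi_univ]
  simp only [finrank_restrictTotalDegree, Fintype.card_fin, Finset.sum_const, Finset.card_univ,
    smul_eq_mul]
  rw [add_comm 3 m, Nat.choose_symm_add]

lemma finrank_map_L1_Hvec (m : ℕ) : finrank ℝ ((Hvec m).map L1) = (m + 1) * (m + 3) := by
  have h := (Hvec m).finrank_map_add_finrank_inf_ker L1
  have hH := Nat.two_mul_add_two_choose_two m
  rw [finrank_Hvec] at h
  cases m with
  | zero =>
    rw [Hvec_zero_inf_ker_L1, finrank_bot] at h
    omega
  | succ k =>
    have hK := Nat.two_mul_add_two_choose_two k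
    rw [Hvec_succ_inf_ker_L1, ← (Submodule.equivMapOfInjective _ radial_injective _).finrank_eq,
      finrank_homogeneousSubmodule, Fintype.card_fin, show 3 + k - 1 = k + 2 by omega,
      Nat.choose_symm_add] at h
    linarith

/-- The first-kind Nédélec space `P⁻_r(Tℝ³) = P_{r-1}(Tℝ³) ⊕ L₁(H_{r-1}(Tℝ³))`:
the sum is direct and (twice) its dimension is `r(r+2)(r+3)`. -/
theorem dim_nedelec_first_kind (r : ℕ) (hr : 1 ≤ r) :
    Disjoint (Pvec (r - 1)) ((Hvec (r - 1)).map L1) ∧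
      2 * Module.finrank ℝ ↥(Pvec (r - 1) ⊔ (Hvec (r - 1)).map L1) =
        r * (r + 2) * (r + 3) := by
  obtain ⟨m, rfl⟩ : ∃ m, r = m + 1 := ⟨r - 1, by omega⟩
  rw [Nat.add_sub_cancel]
  have hdisj : Disjoint (Pvec m) ((Hvec m).map L1) :=
    (Submodule.disjoint_pi_univ fun _ =>
      disjoint_restrictTotalDegree_homogeneousSubmodule m.lt_succ_self).mono_right
      (map_L1_Hvec_le m)
  refine ⟨hdisj, ?_⟩
  have hsum := Submodule.finrank_sup_add_finrank_inf_eq (Pvec m) ((Hvec m).map L1)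
  rw [disjoint_iff.mp hdisj, finrank_bot, add_zero, finrank_map_L1_Hvec] at hsum
  have hP := Nat.six_mul_add_three_choose_three m
  rw [hsum, finrank_Pvec]
  linarith
end

section
/- Let a block matrix K = [[A, Bᵀ],[B, 0]] be given with A an m×m real matrix and B an n×m real matrix. Then K is invertible if and only if ker(Bᵀ) = {0} and for all x ∈ ker(B) with x ≠ 0, Ax ∉ Im(Bᵀ). -/
open Matrix

lemma isUnit_iff_mulVec_ker {N : Type*} [Fintype N] [DecidableEq N]
    (M : Matrix N N ℝ) : IsUnit M ↔ ∀ v, M.mulVec v = 0 → v = 0 := by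
  rw [Matrix.isUnit_iff_isUnit_det, isUnit_iff_ne_zero, Ne,
    ← Matrix.exists_mulVec_eq_zero_iff]
  push_neg
  constructor
  · intro h v hv; by_contra hne; exact (h v hne) hv
  · intro h v hne hv; exact hne (h v hv)

/-- Finite-dimensional saddle-point solvability criterion: the block matrix
`K = [[A, Bᵀ],[B, 0]]` is nonsingular iff `ker Bᵀ = {0}` (i.e. `B` surjective) and for
every nonzero `x ∈ ker B`, `A x ∉ Im Bᵀ`. -/
theorem saddle_point_nonsingular_iff (m n : ℕ)
    (A : Matrix (Fin m) (Fin m) ℝ) (B : Matrix (Fin n) (Fin m) ℝ) :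
    IsUnit (Matrix.fromBlocks A Bᵀ B (0 : Matrix (Fin n) (Fin n) ℝ)) ↔
      ((∀ y : Fin n → ℝ, Bᵀ.mulVec y = 0 → y = 0) ∧
        (∀ x : Fin m → ℝ, B.mulVec x = 0 → x ≠ 0 →
          ¬ ∃ y : Fin n → ℝ, A.mulVec x = Bᵀ.mulVec y)) := by
  rw [isUnit_iff_mulVec_ker]
  constructor
  · intro h
    constructor
    · intro y hy
      have := h (Sum.elim (0 : Fin m → ℝ) y) ?_
      · have := congrArg (fun f => f ∘ Sum.inr) this
        simpa [funext_iff, Function.comp] using this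
      · rw [← Sum.elim_comp_inl_inr (Sum.elim (0 : Fin m → ℝ) y)]
        simp only [Sum.elim_comp_inl, Sum.elim_comp_inr, Matrix.fromBlocks_mulVec]
        simp [hy]
    · intro x hx hxne ⟨y, hy⟩
      have := h (Sum.elim x (-y)) ?_
      · exact hxne (by have := congrArg (fun f => f ∘ Sum.inl) this
                       simpa [funext_iff, Function.comp] using this)
      · rw [← Sum.elim_comp_inl_inr (Sum.elim x (-y))]
        simp only [Sum.elim_comp_inl, Sum.elim_comp_inr, Matrix.fromBlocks_mulVec]
        simp [hx, hy, Matrix.mulVec_neg]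
  · rintro ⟨h1, h2⟩ v hv
    rw [← Sum.elim_comp_inl_inr v] at hv ⊢
    set x := v ∘ Sum.inl
    set y := v ∘ Sum.inr
    rw [Matrix.fromBlocks_mulVec] at hv
    have hBx : B.mulVec x = 0 := by
      have := congrArg (fun f => f ∘ Sum.inr) hv
      simpa [funext_iff, Function.comp] using this
    have hAx : A.mulVec x + Bᵀ.mulVec y = 0 := by
      have := congrArg (fun f => f ∘ Sum.inl) hv
      simpa [funext_iff, Function.comp] using this
    have hx0 : x = 0 := by
      by_contra hxne
      exact h2 x hBx hxne ⟨-y, by rw [Matrix.mulVec_neg]; exact eq_neg_of_add_eq_zero_left hAx⟩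
    have hy0 : y = 0 := by
      apply h1
      rw [hx0] at hAx
      simpa using hAx
    rw [hx0, hy0]; simp
end
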